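/- arXiv:1808.03139 — 2 statements merged into one kernel-verified Lean document; each statement's English description precedes it below -/
import Mathlib

section
/- Every finite tree G with maximum degree at most 4 admits a straight-line drawing whose ply disks with parameter α = 1/3 are pairwise disjoint, i.e., a drawing with ply number 1 for α = 1/3. -/
/-!
Root the tree and draw the edge from each non-root vertex `v` to its parent parallel to an axis,
with length `ℓ v = 2⁻¹ ^ depth v`, so that siblings leave their parent in distinct directions and
no edge turns back along the edge above it; four directions suffice because the root has at most
four children and every other vertex at most three. In the taxicab metric every descendant `w` of
`a` then lies within `ℓ a - ℓ w` of `a`. So for two non-adjacent vertices, a linear functional with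
coefficients in `[-1, 1]` that is `1` on the first two edges of the path down from the upper vertex,
or `-1` and `1` on the first edges of the two branches, separates them by `(ℓ v + ℓ w) / 2` in the
taxicab metric, hence by `(ℓ v + ℓ w) / 3` in the Euclidean one as `2 √2 ≤ 3`. Adjacent vertices
are exactly `ℓ` of the child apart, which is `(ℓ v + ℓ w) / 3` as well. Since every neighbour of
`v` is at distance at most `ℓ v`, ply disks have radius at most `ℓ v / 3` and are disjoint.
-/

open Real

/-- The ply-disk radius of a vertex `v` in a straight-line drawing `ρ` with
parameter `α`: `α` times the maximum distance from `ρ v` to a drawn neighbor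
(`0` if `v` is isolated, since in `ℝ` the supremum over an empty family is `0`). -/
noncomputable def plyRadius {V : Type*} (G : SimpleGraph V)
    (ρ : V → EuclideanSpace ℝ (Fin 2)) (α : ℝ) (v : V) : ℝ :=
  α * ⨆ w : G.neighborSet v, dist (ρ v) (ρ w)

open RealInnerProductSpace

section Taxicab

variable {n : ℕ}

def taxicabDist (p q : EuclideanSpace ℝ (Fin n)) : ℝ := ∑ i, |p i - q i|

theorem taxicabDist_triangle (p q r : EuclideanSpace ℝ (Fin n)) :
    taxicabDist p r ≤ taxicabDist p q + taxicabDist q r := by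
  rw [taxicabDist, taxicabDist, taxicabDist, ← Finset.sum_add_distrib]
  exact Finset.sum_le_sum fun i _ => abs_sub_le _ _ _

theorem abs_inner_sub_le_taxicabDist {σ : EuclideanSpace ℝ (Fin n)} (hσ : ∀ i, |σ i| ≤ 1)
    (p q : EuclideanSpace ℝ (Fin n)) : |⟪σ, q - p⟫| ≤ taxicabDist p q := by
  rw [PiLp.inner_apply, taxicabDist]
  refine (Finset.abs_sum_le_sum_abs _ _).trans (Finset.sum_le_sum fun i _ => ?_)
  calc |⟪σ i, (q - p) i⟫| = |σ i| * |p i - q i| := by simp [abs_mul, abs_sub_comm, mul_comm]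
    _ ≤ |p i - q i| := mul_le_of_le_one_left (abs_nonneg _) (hσ i)

theorem taxicabDist_le_sqrt_mul_dist (p q : EuclideanSpace ℝ (Fin n)) :
    taxicabDist p q ≤ √n * dist p q := by
  rw [EuclideanSpace.dist_eq, ← Real.sqrt_mul (Nat.cast_nonneg n)]
  refine Real.le_sqrt_of_sq_le ?_
  simpa [taxicabDist, Real.dist_eq, sq_abs] using
    sq_sum_le_card_mul_sum_sq (s := Finset.univ) (f := fun i => |p i - q i|)

theorem two_mul_taxicabDist_le_three_mul_dist (p q : EuclideanSpace ℝ (Fin 2)) :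
    2 * taxicabDist p q ≤ 3 * dist p q := by
  have hsqrt : √2 ≤ 3 / 2 := Real.sqrt_le_iff.mpr (by norm_num)
  have h := taxicabDist_le_sqrt_mul_dist p q
  push_cast at h
  nlinarith [mul_le_mul_of_nonneg_right hsqrt (dist_nonneg (x := p) (y := q))]

end Taxicab

noncomputable def axisDir : Fin 4 → EuclideanSpace ℝ (Fin 2) :=
  ![!₂[1, 0], !₂[0, 1], !₂[-1, 0], !₂[0, -1]]

theorem axisDir_add_two (a : Fin 4) : axisDir (a + 2) = -axisDir a := by
  ext i; fin_cases a <;> fin_cases i <;> simp [axisDir]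

theorem norm_axisDir (a : Fin 4) : ‖axisDir a‖ = 1 := by
  fin_cases a <;> simp [axisDir, EuclideanSpace.norm_eq, Fin.sum_univ_two]

theorem taxicabDist_add_smul_axisDir (p : EuclideanSpace ℝ (Fin 2)) (t : ℝ) (a : Fin 4) :
    taxicabDist p (p + t • axisDir a) = |t| := by
  fin_cases a <;> simp [taxicabDist, axisDir, Fin.sum_univ_two]

theorem exists_inner_axisDir_eq_one {a b : Fin 4} (h : b ≠ a + 2) :
    ∃ σ : EuclideanSpace ℝ (Fin 2), (∀ i, |σ i| ≤ 1) ∧ ⟪σ, axisDir a⟫ = 1 ∧ ⟪σ, axisDir b⟫ = 1 := by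
  refine ⟨if b = a then axisDir a else axisDir a + axisDir b, ?_⟩
  fin_cases a <;> fin_cases b <;> first | exact absurd rfl h |
    simp [axisDir, PiLp.inner_apply, Fin.forall_fin_two, Fin.sum_univ_two, EuclideanSpace.norm_eq]

theorem exists_inner_axisDir_eq_neg_one {a b : Fin 4} (h : a ≠ b) :
    ∃ σ : EuclideanSpace ℝ (Fin 2), (∀ i, |σ i| ≤ 1) ∧
      ⟪σ, axisDir a⟫ = -1 ∧ ⟪σ, axisDir b⟫ = 1 := by
  obtain ⟨σ, hσ, ha, hb⟩ := exists_inner_axisDir_eq_one (a := a + 2) (b := b) (by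
    rwa [add_assoc, show (2 + 2 : Fin 4) = 0 from rfl, add_zero, ne_comm])
  rw [axisDir_add_two, inner_neg_right, neg_eq_iff_eq_neg] at ha
  exact ⟨σ, hσ, ha, hb⟩

structure ParentTree (V : Type*) where
  root : V
  parent : V → V
  depth : V → ℕ
  depth_parent : ∀ v, v ≠ root → depth (parent v) + 1 = depth v

namespace ParentTree

variable {V : Type*} (T : ParentTree V)

def IsParent (u v : V) : Prop := v ≠ T.root ∧ T.parent v = u

def IsAncestor : V → V → Prop := Relation.ReflTransGen T.IsParent

def children (u : V) : Set V := {c | T.IsParent u c}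

theorem isParent_parent {v : V} (hv : v ≠ T.root) : T.IsParent (T.parent v) v := ⟨hv, rfl⟩

theorem IsParent.depth_add_one {T : ParentTree V} {u v : V} (h : T.IsParent u v) :
    T.depth u + 1 = T.depth v :=
  h.2 ▸ T.depth_parent v h.1

theorem IsParent.not_isParent {T : ParentTree V} {u v : V} (h : T.IsParent u v) :
    ¬T.IsParent v u := fun h' => by
  have := h.depth_add_one
  have := h'.depth_add_one
  omega

@[elab_as_elim]
theorem induction {motive : V → Prop} (root : motive T.root)
    (parent : ∀ v, v ≠ T.root → motive (T.parent v) → motive v) (v : V) : motive v := by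
  induction hn : T.depth v using Nat.strong_induction_on generalizing v with
  | _ n ih =>
    by_cases hv : v = T.root
    · exact hv ▸ root
    · exact parent v hv (ih _ (hn ▸ T.depth_parent v hv ▸ Nat.lt_succ_self _) _ rfl)

theorem isAncestor_root (v : V) : T.IsAncestor T.root v :=
  T.induction .refl (fun _ hv h => h.tail (T.isParent_parent hv)) v

theorem isAncestor_or_isAncestor_or_exists_siblings (v w : V) :
    T.IsAncestor v w ∨ T.IsAncestor w v ∨
      ∃ m c₁ c₂, c₁ ≠ c₂ ∧ T.IsParent m c₁ ∧ T.IsParent m c₂ ∧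
        T.IsAncestor c₁ v ∧ T.IsAncestor c₂ w := by
  induction w using T.induction with
  | root => exact .inr (.inl (T.isAncestor_root v))
  | parent w hw ih =>
    rcases ih with h | h | ⟨m, c₁, c₂, hne, h₁, h₂, hv, hw'⟩
    · exact .inl (h.tail (T.isParent_parent hw))
    · rcases h.cases_head with rfl | ⟨c, hc, hcv⟩
      · exact .inl (.single (T.isParent_parent hw))
      · by_cases hcw : c = w
        · exact .inr (.inl (hcw ▸ hcv))
        · exact .inr (.inr ⟨_, c, w, hcw, hc, T.isParent_parent hw, hcv, .refl⟩)
    · exact .inr (.inr ⟨m, c₁, c₂, hne, h₁, h₂, hv, hw'.tail (T.isParent_parent hw)⟩)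

open Classical in
noncomputable def propagate {α : Type*} (base : α) (step : V → α → α) (v : V) : α :=
  if _ : v = T.root then base else step v (propagate base step (T.parent v))
termination_by T.depth v
decreasing_by exact T.depth_parent v ‹_› ▸ Nat.lt_succ_self _

theorem propagate_of_ne_root {α : Type*} (base : α) (step : V → α → α) {v : V}
    (hv : v ≠ T.root) : T.propagate base step v = step v (T.propagate base step (T.parent v)) := by
  rw [propagate, dif_neg hv]

structure AdmissibleDirections (dir : V → Fin 4) : Prop where
  injOn_children : ∀ u, Set.InjOn dir (T.children u)
  ne_add_two : ∀ u v, T.IsParent u v → u ≠ T.root → dir v ≠ dir u + 2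

theorem exists_admissibleDirections (hroot : (T.children T.root).encard ≤ 4)
    (hchildren : ∀ u, u ≠ T.root → (T.children u).encard ≤ 3) :
    ∃ dir, T.AdmissibleDirections dir := by
  classical
  let allowed (u : V) (d : Fin 4) : Finset (Fin 4) :=
    if u = T.root then Finset.univ else Finset.univ.erase (d + 2)
  have hlabel : ∀ u d, ∃ κ : V → Fin 4, T.children u ⊆ κ ⁻¹' allowed u d ∧
      Set.InjOn κ (T.children u) := by
    intro u d
    have hcard : (T.children u).encard ≤ (allowed u d : Set (Fin 4)).encard := by
      by_cases hu : u = T.root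
      · simpa [allowed, hu] using hroot
      · rw [Set.encard_coe_eq_coe_finsetCard]
        simpa [allowed, hu, Finset.card_erase_of_mem] using hchildren u hu
    exact ((Set.toFinite _).finite_of_encard_le hcard).exists_injOn_of_encard_le hcard
  -- `κ u d` labels the children of `u` when `u` itself points in direction `d`.
  choose κ hκ hκinj using hlabel
  let dir := T.propagate 0 fun v d => κ (T.parent v) d v
  have hdir : ∀ u v, T.IsParent u v → dir v = κ u (dir u) v := by
    rintro u v ⟨hv, rfl⟩
    exact T.propagate_of_ne_root _ _ hv
  refine ⟨dir, ⟨fun u c hc c' hc' h => hκinj u (dir u) hc hc' ?_, fun u v huv hu => ?_⟩⟩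
  · rwa [← hdir u c hc, ← hdir u c' hc']
  · have := hκ u (dir u) huv
    simpa [allowed, hu, hdir u v huv] using this

noncomputable def edgeLength (v : V) : ℝ := 2⁻¹ ^ T.depth v

theorem edgeLength_pos (v : V) : 0 < T.edgeLength v := by
  unfold edgeLength; positivity

theorem edgeLength_of_isParent {u v : V} (h : T.IsParent u v) :
    T.edgeLength u = 2 * T.edgeLength v := by
  rw [edgeLength, edgeLength, ← h.depth_add_one, pow_succ]
  ring

variable (dir : V → Fin 4)

noncomputable def axisDrawing : V → EuclideanSpace ℝ (Fin 2) :=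
  T.propagate 0 fun v p => p + T.edgeLength v • axisDir (dir v)

variable {T dir}

theorem axisDrawing_of_isParent {u v : V} (h : T.IsParent u v) :
    T.axisDrawing dir v = T.axisDrawing dir u + T.edgeLength v • axisDir (dir v) := by
  obtain ⟨hv, rfl⟩ := h
  exact T.propagate_of_ne_root _ _ hv

theorem dist_axisDrawing_of_isParent {u v : V} (h : T.IsParent u v) :
    dist (T.axisDrawing dir u) (T.axisDrawing dir v) = T.edgeLength v := by
  rw [axisDrawing_of_isParent h, dist_self_add_right, norm_smul, norm_axisDir, mul_one,
    Real.norm_of_nonneg (T.edgeLength_pos v).le]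

theorem taxicabDist_axisDrawing_of_isParent {u v : V} (h : T.IsParent u v) :
    taxicabDist (T.axisDrawing dir u) (T.axisDrawing dir v) = T.edgeLength v := by
  rw [axisDrawing_of_isParent h, taxicabDist_add_smul_axisDir, abs_of_pos (T.edgeLength_pos v)]

theorem inner_sub_axisDrawing_of_isParent (σ : EuclideanSpace ℝ (Fin 2)) {u v : V}
    (h : T.IsParent u v) :
    ⟪σ, T.axisDrawing dir v - T.axisDrawing dir u⟫ = T.edgeLength v * ⟪σ, axisDir (dir v)⟫ := by
  rw [axisDrawing_of_isParent h, add_sub_cancel_left, inner_smul_right]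

theorem taxicabDist_axisDrawing_le_of_isAncestor {a w : V} (h : T.IsAncestor a w) :
    taxicabDist (T.axisDrawing dir a) (T.axisDrawing dir w) ≤ T.edgeLength a - T.edgeLength w := by
  induction h with
  | refl => simp [taxicabDist]
  | @tail b c _ hbc ih =>
    have := taxicabDist_triangle (T.axisDrawing dir a) (T.axisDrawing dir b) (T.axisDrawing dir c)
    rw [taxicabDist_axisDrawing_of_isParent hbc] at this
    linarith [T.edgeLength_of_isParent hbc]

variable (dir) in
theorem abs_inner_sub_axisDrawing_le_of_isAncestor {σ : EuclideanSpace ℝ (Fin 2)}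
    (hσ : ∀ i, |σ i| ≤ 1) {a w : V} (h : T.IsAncestor a w) :
    |⟪σ, T.axisDrawing dir w - T.axisDrawing dir a⟫| ≤ T.edgeLength a - T.edgeLength w :=
  (abs_inner_sub_le_taxicabDist hσ _ _).trans (taxicabDist_axisDrawing_le_of_isAncestor h)

theorem dist_axisDrawing_le_edgeLength {v w : V} (h : T.IsParent v w ∨ T.IsParent w v) :
    dist (T.axisDrawing dir v) (T.axisDrawing dir w) ≤ T.edgeLength v := by
  rcases h with h | h
  · rw [dist_axisDrawing_of_isParent h]
    linarith [T.edgeLength_of_isParent h, T.edgeLength_pos w]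
  · rw [dist_comm, dist_axisDrawing_of_isParent h]

namespace AdmissibleDirections

theorem edgeLength_add_le_two_mul_taxicabDist_of_grandchild (hdir : T.AdmissibleDirections dir)
    {v c g w : V} (hvc : T.IsParent v c) (hcg : T.IsParent c g) (hgw : T.IsAncestor g w) :
    T.edgeLength v + T.edgeLength w ≤
      2 * taxicabDist (T.axisDrawing dir v) (T.axisDrawing dir w) := by
  obtain ⟨σ, hσ, hσc, hσg⟩ := exists_inner_axisDir_eq_one (hdir.ne_add_two c g hcg hvc.1)
  have hvw : T.axisDrawing dir w - T.axisDrawing dir v =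
      (T.axisDrawing dir w - T.axisDrawing dir g) + (T.axisDrawing dir g - T.axisDrawing dir c) +
        (T.axisDrawing dir c - T.axisDrawing dir v) := by abel
  have hlower := (abs_le.mp (abs_inner_sub_axisDrawing_le_of_isAncestor dir hσ hgw)).1
  have hupper := (abs_le.mp (abs_inner_sub_le_taxicabDist hσ
    (T.axisDrawing dir v) (T.axisDrawing dir w))).2
  rw [hvw, inner_add_right, inner_add_right, inner_sub_axisDrawing_of_isParent σ hcg,
    inner_sub_axisDrawing_of_isParent σ hvc, hσc, hσg] at hupper
  linarith [T.edgeLength_of_isParent hvc, T.edgeLength_pos w]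

theorem edgeLength_add_le_taxicabDist_of_siblings (hdir : T.AdmissibleDirections dir)
    {m c₁ c₂ v w : V} (hne : c₁ ≠ c₂)
    (h₁ : T.IsParent m c₁) (h₂ : T.IsParent m c₂) (hv : T.IsAncestor c₁ v)
    (hw : T.IsAncestor c₂ w) :
    T.edgeLength v + T.edgeLength w ≤ taxicabDist (T.axisDrawing dir v) (T.axisDrawing dir w) := by
  obtain ⟨σ, hσ, hσ₁, hσ₂⟩ :=
    exists_inner_axisDir_eq_neg_one fun h => hne (hdir.injOn_children m h₁ h₂ h)
  have hvw : T.axisDrawing dir w - T.axisDrawing dir v =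
      (T.axisDrawing dir w - T.axisDrawing dir c₂) +
        (T.axisDrawing dir c₂ - T.axisDrawing dir m) -
        (T.axisDrawing dir c₁ - T.axisDrawing dir m) -
        (T.axisDrawing dir v - T.axisDrawing dir c₁) := by abel
  have hv' := (abs_le.mp (abs_inner_sub_axisDrawing_le_of_isAncestor dir hσ hv)).2
  have hw' := (abs_le.mp (abs_inner_sub_axisDrawing_le_of_isAncestor dir hσ hw)).1
  have hupper := (abs_le.mp (abs_inner_sub_le_taxicabDist hσ
    (T.axisDrawing dir v) (T.axisDrawing dir w))).2
  rw [hvw, inner_sub_right, inner_sub_right, inner_add_right,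
    inner_sub_axisDrawing_of_isParent σ h₁, inner_sub_axisDrawing_of_isParent σ h₂,
    hσ₁, hσ₂] at hupper
  linarith

theorem edgeLength_add_le_three_mul_dist_of_isAncestor (hdir : T.AdmissibleDirections dir)
    {v w : V} (h : T.IsAncestor v w) (hvw : v ≠ w) :
    T.edgeLength v + T.edgeLength w ≤ 3 * dist (T.axisDrawing dir v) (T.axisDrawing dir w) := by
  rcases h.cases_head with rfl | ⟨c, hvc, hcw⟩
  · exact absurd rfl hvw
  rcases hcw.cases_head with rfl | ⟨g, hcg, hgw⟩
  · rw [dist_axisDrawing_of_isParent hvc, T.edgeLength_of_isParent hvc]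
    linarith
  · linarith [hdir.edgeLength_add_le_two_mul_taxicabDist_of_grandchild hvc hcg hgw,
      two_mul_taxicabDist_le_three_mul_dist (T.axisDrawing dir v) (T.axisDrawing dir w)]

theorem edgeLength_add_le_three_mul_dist (hdir : T.AdmissibleDirections dir) {v w : V}
    (hvw : v ≠ w) :
    T.edgeLength v + T.edgeLength w ≤ 3 * dist (T.axisDrawing dir v) (T.axisDrawing dir w) := by
  rcases T.isAncestor_or_isAncestor_or_exists_siblings v w with
    h | h | ⟨m, c₁, c₂, hne, h₁, h₂, hv, hw⟩
  · exact hdir.edgeLength_add_le_three_mul_dist_of_isAncestor h hvw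
  · simpa only [add_comm, dist_comm] using
      hdir.edgeLength_add_le_three_mul_dist_of_isAncestor h hvw.symm
  · linarith [hdir.edgeLength_add_le_taxicabDist_of_siblings hne h₁ h₂ hv hw,
      two_mul_taxicabDist_le_three_mul_dist (T.axisDrawing dir v) (T.axisDrawing dir w),
      T.edgeLength_pos v, T.edgeLength_pos w]

end AdmissibleDirections

end ParentTree

namespace SimpleGraph

variable {V : Type*} {G : SimpleGraph V}

theorem Connected.exists_adj_dist_add_one (hG : G.Connected) (r : V) {v : V} (hv : v ≠ r) :
    ∃ u, G.Adj u v ∧ G.dist r u + 1 = G.dist r v := by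
  obtain ⟨p, hp⟩ := hG.exists_walk_length_eq_dist v r
  cases p with
  | nil => exact absurd rfl hv
  | @cons _ u _ h q =>
    refine ⟨u, h.symm, ?_⟩
    have hu : G.dist r u ≤ q.length := dist_comm (G := G) ▸ dist_le q
    rw [Walk.length_cons, dist_comm] at hp
    rcases h.symm.diff_dist_adj (u := r) with h' | h' | h' <;> omega

theorem IsTree.eq_of_adj_of_dist_add_one (hG : G.IsTree) (r : V) {u₁ u₂ v : V}
    (h₁ : G.Adj u₁ v) (h₂ : G.Adj u₂ v) (hd₁ : G.dist r u₁ + 1 = G.dist r v)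
    (hd₂ : G.dist r u₂ + 1 = G.dist r v) : u₁ = u₂ := by
  classical
  obtain ⟨p, hp, -⟩ := hG.connected.exists_path_of_dist r v
  have hpenultimate : ∀ u, G.Adj u v → G.dist r u + 1 = G.dist r v → u = p.penultimate := by
    intro u hu hdu
    obtain ⟨q, hq, hql⟩ := hG.connected.exists_path_of_dist r u
    have hvq : v ∉ q.support := fun hv => by
      have := dist_le (q.takeUntil v hv)
      have := q.length_takeUntil_le_length hv
      omega
    exact hG.isAcyclic.eq_penultimate_of_adj_end hp hu.symm
      (hG.isAcyclic.mem_support_of_ne_mem_support_of_adj_of_isPath hp hq hu.symm hvq)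
  exact (hpenultimate u₁ h₁ hd₁).trans (hpenultimate u₂ h₂ hd₂).symm

theorem IsTree.exists_parentTree (hG : G.IsTree) :
    ∃ T : ParentTree V, ∀ u v, G.Adj u v ↔ T.IsParent u v ∨ T.IsParent v u := by
  obtain ⟨r⟩ := hG.connected.nonempty
  have hparent : ∀ v, ∃ u, v ≠ r → G.Adj u v ∧ G.dist r u + 1 = G.dist r v := by
    intro v
    by_cases hv : v = r
    · exact ⟨v, fun h => absurd hv h⟩
    · exact (hG.connected.exists_adj_dist_add_one r hv).imp fun _ hu _ => hu
  choose parent hparent using hparent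
  refine ⟨⟨r, parent, G.dist r, fun v hv => (hparent v hv).2⟩, fun u v => ⟨fun h => ?_, ?_⟩⟩
  · rcases hG.dist_eq_dist_add_one_of_adj r h with huv | hvu
    · have hu : u ≠ r := by rintro rfl; simp at huv
      exact .inr ⟨hu, hG.eq_of_adj_of_dist_add_one r (hparent u hu).1 h.symm (hparent u hu).2
        huv.symm⟩
    · have hv : v ≠ r := by rintro rfl; simp at hvu
      exact .inl ⟨hv, hG.eq_of_adj_of_dist_add_one r (hparent v hv).1 h (hparent v hv).2
        hvu.symm⟩
  · rintro (⟨hv, rfl⟩ | ⟨hu, rfl⟩)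
    · exact (hparent v hv).1
    · exact (hparent u hu).1.symm

end SimpleGraph

namespace ParentTree

variable {V : Type*} (T : ParentTree V) {G : SimpleGraph V} [G.LocallyFinite]

theorem encard_children_le_degree (hG : ∀ u v, G.Adj u v ↔ T.IsParent u v ∨ T.IsParent v u)
    (u : V) : (T.children u).encard ≤ G.degree u := by
  rw [← G.card_neighborFinset_eq_degree, ← Set.encard_coe_eq_coe_finsetCard,
    SimpleGraph.coe_neighborFinset]
  exact Set.encard_le_encard fun c hc => (hG u c).2 (.inl hc)

theorem encard_children_lt_degree (hG : ∀ u v, G.Adj u v ↔ T.IsParent u v ∨ T.IsParent v u)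
    {u : V} (hu : u ≠ T.root) : (T.children u).encard < G.degree u := by
  rw [← G.card_neighborFinset_eq_degree, ← Set.encard_coe_eq_coe_finsetCard,
    SimpleGraph.coe_neighborFinset]
  have hsub : T.children u ⊆ G.neighborSet u := fun c hc => (hG u c).2 (.inl hc)
  refine Set.Finite.encard_lt_encard ((G.neighborSet u).toFinite.subset hsub)
    ((Set.ssubset_iff_of_subset hsub).2 ⟨T.parent u, (hG u _).2 (.inr (T.isParent_parent hu)), ?_⟩)
  exact (T.isParent_parent hu).not_isParent

end ParentTree

theorem plyRadius_le {V : Type*} {G : SimpleGraph V} {ρ : V → EuclideanSpace ℝ (Fin 2)}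
    {α r : ℝ} (hα : 0 ≤ α) (hr : 0 ≤ r) {v : V} (h : ∀ w, G.Adj v w → dist (ρ v) (ρ w) ≤ r) :
    plyRadius G ρ α v ≤ α * r :=
  mul_le_mul_of_nonneg_left (Real.iSup_le (fun w => h w w.2) hr) hα

theorem stmt2_general (V : Type*) [Fintype V]
    (G : SimpleGraph V) [DecidableRel G.Adj]
    (hT : G.IsTree) (hdeg : ∀ v : V, G.degree v ≤ 4) :
    ∃ ρ : V → EuclideanSpace ℝ (Fin 2), Function.Injective ρ ∧
      Pairwise fun v w : V =>
        Disjoint (Metric.ball (ρ v) (plyRadius G ρ (1 / 3) v))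
          (Metric.ball (ρ w) (plyRadius G ρ (1 / 3) w)) := by
  obtain ⟨T, hGT⟩ := hT.exists_parentTree
  have hdeg' (u : V) : (G.degree u : ℕ∞) ≤ 4 := by exact_mod_cast hdeg u
  obtain ⟨dir, hdir⟩ := T.exists_admissibleDirections
    ((T.encard_children_le_degree hGT T.root).trans (hdeg' T.root))
    fun u hu => Order.le_of_lt_succ ((T.encard_children_lt_degree hGT hu).trans_le (hdeg' u))
  have hply (v : V) : plyRadius G (T.axisDrawing dir) (1 / 3) v ≤ 1 / 3 * T.edgeLength v :=
    plyRadius_le (by norm_num) (T.edgeLength_pos v).le fun w h =>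
      T.dist_axisDrawing_le_edgeLength ((hGT v w).1 h)
  refine ⟨T.axisDrawing dir, fun v w hvw => ?_, fun v w hvw => Metric.ball_disjoint_ball ?_⟩
  · by_contra hne
    have := hdir.edgeLength_add_le_three_mul_dist hne
    rw [hvw, dist_self] at this
    linarith [T.edgeLength_pos v, T.edgeLength_pos w]
  · linarith [hply v, hply w, hdir.edgeLength_add_le_three_mul_dist hvw]

/-- Every finite tree with maximum degree at most `4` has a
straight-line drawing whose ply disks with parameter `α = 1/3` are pairwise
disjoint, i.e. a 1-ply drawing for `α = 1/3`. -/
theorem stmt2 (V : Type*) [Fintype V] [DecidableEq V]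
    (G : SimpleGraph V) [DecidableRel G.Adj]
    (hT : G.IsTree) (hdeg : ∀ v : V, G.degree v ≤ 4) :
    ∃ ρ : V → EuclideanSpace ℝ (Fin 2), Function.Injective ρ ∧
      Pairwise fun v w : V =>
        Disjoint (Metric.ball (ρ v) (plyRadius G ρ (1 / 3) v))
          (Metric.ball (ρ w) (plyRadius G ρ (1 / 3) w)) :=
  stmt2_general V G hT hdeg
end

section
/- For every α > 0 there exists a constant c > 0 such that for every natural number n ≥ 16 there exist m, h ≥ 1 with the following properties: the graph G(m,h) (m disjoint complete binary trees of height h plus an apex adjacent to every tree vertex) has at most n vertices, and every straight-line drawing ρ of G(m,h) has ply number (with parameter α) at least c·√(n / log n). Since G(m,h) is a subgraph of a 2-tree, there are 2-trees with O(n) vertices whose every drawing has ply number Ω(√(n / log n)), for any fixed α > 0. -/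
/-!
Fix one tree of `G(m,h)` in a drawing and give each tree vertex the dyadic scale `⌊log₂ d⌋` of its
distance `d` to the apex. The apex is a neighbour, so the ply disk of the vertex has radius at least
`α d`. Rescaling the vertices of one scale to a fixed ball, a fixed finite cover of that ball by
balls of radius `α / 2` yields finitely many points, each vertex's ply disk containing one of them:
every scale holds `O(K)` vertices, `K` the ply number. If the scale jumps by more than a constant
along a tree edge, the ply disk of the endpoint nearer to the apex contains the apex, so there are
`O(K)` jumping edges. Walking up from a vertex to the first jumping edge (or the root) changes the
scale by `O(h)`, so the tree's `≥ 2^h` vertices lie in `O(K · h)` scales relative to `O(K)` anchors,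
whence `2^h = O(h K²)`. With `2^h ≈ n` this reads `K = Ω(√(n / log n))`.
-/

open Real

/-- The vertex set of `G(m,h)`: an apex vertex (`none`) together with, for each
of `m` trees, the Boolean strings of length at most `h` (the vertices of a
complete binary tree of height `h`); there are `m·(2^{h+1}−1)+1` vertices. -/
def TreeApexVertex (m h : ℕ) : Type :=
  Option (Fin m × {l : List Bool // l.length ≤ h})

/-- The graph `G(m,h)`: `m` disjoint complete binary trees of height `h`
(each string `l` of length `< h` is joined to `l ++ [b]` within the same tree)
together with an apex vertex adjacent to every tree vertex.  It is a subgraph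
of a 2-tree. -/
def treesWithApex (m h : ℕ) : SimpleGraph (TreeApexVertex m h) :=
  SimpleGraph.fromRel fun x y =>
    (x = none ∧ y ≠ none) ∨
    (∃ (i : Fin m) (l l' : {l : List Bool // l.length ≤ h}) (b : Bool),
      x = some (i, l) ∧ y = some (i, l') ∧ l'.val = l.val ++ [b])

open Metric Finset

section Counting

variable {ι : Type*}

theorem card_le_card_mul_of_forall_exists_mem {E : Type*} [DecidableEq ι] {U : ι → Set E}
    [∀ g i, Decidable (g ∈ U i)] {s : Finset ι} {T : Finset E} {K : ℕ}
    (hcover : ∀ i ∈ s, ∃ g ∈ T, g ∈ U i) (hdepth : ∀ g ∈ T, #{i ∈ s | g ∈ U i} ≤ K) :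
    #s ≤ #T * K :=
  calc #s ≤ #(T.biUnion fun g => {i ∈ s | g ∈ U i}) := card_le_card fun i hi => by
        obtain ⟨g, hg, hgi⟩ := hcover i hi
        exact mem_biUnion.2 ⟨g, hg, mem_filter.2 ⟨hi, hgi⟩⟩
    _ ≤ #T * K := card_biUnion_le_card_mul _ _ _ hdepth

theorem card_le_of_forall_exists_abs_sub_le [DecidableEq ι] {s B : Finset ι} {t : ι → ℤ}
    {A M : ℕ} (hanchor : ∀ x ∈ s, ∃ b ∈ B, |t x - t b| ≤ A)
    (hlevel : ∀ τ, #{x ∈ s | t x = τ} ≤ M) : #s ≤ #B * (2 * A + 1) * M := by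
  have hIcc : ∀ b, #(Icc (t b - A) (t b + A)) = 2 * A + 1 := fun b => by
    rw [Int.card_Icc]; omega
  calc #s ≤ #(B.biUnion fun b =>
          (Icc (t b - A) (t b + A)).biUnion fun τ => {x ∈ s | t x = τ}) :=
        card_le_card fun x hx => by
          obtain ⟨b, hb, hxb⟩ := hanchor x hx
          simp only [mem_biUnion, mem_Icc, mem_filter]
          exact ⟨b, hb, t x, by constructor <;> linarith [abs_le.1 hxb], hx, rfl⟩
    _ ≤ #B * ((2 * A + 1) * M) := card_biUnion_le_card_mul _ _ _ fun b _ =>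
        (card_biUnion_le_card_mul _ _ _ fun τ _ => hlevel τ).trans_eq (by rw [hIcc])
    _ = #B * (2 * A + 1) * M := (mul_assoc _ _ _).symm

theorem exists_abs_sub_le_depth_mul {par : ι → ι} (depth : ι → ℕ)
    (hdepth : ∀ x, depth x ≠ 0 → depth (par x) + 1 = depth x) (t : ι → ℤ) (D : ℕ) (x : ι) :
    ∃ b, (depth b = 0 ∨ D < |t b - t (par b)|) ∧ |t x - t b| ≤ depth x * D := by
  induction hn : depth x generalizing x with
  | zero => exact ⟨x, Or.inl hn, by simp⟩
  | succ n ih =>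
    by_cases hjump : D < |t x - t (par x)|
    · exact ⟨x, Or.inr hjump, by simp⟩
    · obtain ⟨b, hb, hpb⟩ := ih (par x) (by have := hdepth x (by omega); omega)
      refine ⟨b, hb, ?_⟩
      calc |t x - t b| ≤ |t x - t (par x)| + |t (par x) - t b| := abs_sub_le _ _ _
        _ ≤ D + n * D := add_le_add (not_lt.1 hjump) hpb
        _ = ((n + 1 : ℕ) : ℤ) * D := by push_cast; ring

theorem card_le_mul_card_of_forall_mem_or_parent_mem [Fintype ι] [DecidableEq ι]
    {par : ι → ι} {k : ℕ} (hk : ∀ y, #{x | x ≠ y ∧ par x = y} ≤ k) {s Q : Finset ι}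
    (h : ∀ x ∈ s, x ∈ Q ∨ par x ∈ Q) : #s ≤ (k + 1) * #Q := by
  calc #s ≤ #(Q.biUnion fun y => insert y ({x | x ≠ y ∧ par x = y} : Finset ι)) :=
        card_le_card fun x hx => by
          simp only [mem_biUnion, mem_insert, mem_filter, mem_univ, true_and]
          rcases h x hx with hxQ | hpQ
          · exact ⟨x, hxQ, Or.inl rfl⟩
          · exact ⟨par x, hpQ, (eq_or_ne x (par x)).imp id fun hne => ⟨hne, rfl⟩⟩
    _ ≤ #Q * (k + 1) := card_biUnion_le_card_mul _ _ _ fun y _ =>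
        (card_insert_le _ _).trans (Nat.add_le_add_right (hk y) 1)
    _ = (k + 1) * #Q := mul_comm _ _

end Counting

section Geometry

theorem exists_dist_add_smul_lt_of_closedBall_subset {E : Type*} [NormedAddCommGroup E]
    [NormedSpace ℝ E] {T : Set E} {ε : ℝ} (hT : closedBall 0 1 ⊆ ⋃ g ∈ T, ball g ε) {a x : E}
    {R : ℝ} (hR : 0 < R) (hx : dist x a ≤ R) : ∃ g ∈ T, dist x (a + R • g) < ε * R := by
  have hy : R⁻¹ • (x - a) ∈ closedBall (0 : E) 1 := by
    rw [mem_closedBall_zero_iff, norm_smul, norm_inv, Real.norm_of_nonneg hR.le,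
      ← dist_eq_norm, inv_mul_le_one₀ hR]
    exact hx
  obtain ⟨g, hg, hyg⟩ := Set.mem_iUnion₂.1 (hT hy)
  refine ⟨g, hg, ?_⟩
  have hsub : x - (a + R • g) = R • (R⁻¹ • (x - a) - g) := by
    rw [smul_sub, smul_inv_smul₀ hR.ne']; abel
  rw [dist_eq_norm, hsub, norm_smul, Real.norm_of_nonneg hR.le, ← dist_eq_norm, mul_comm ε]
  exact mul_lt_mul_of_pos_left (mem_ball.1 hyg) hR

theorem mem_ball_of_add_lt_log_dist {X : Type*} [PseudoMetricSpace X] {α r : ℝ} {J : ℕ}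
    (hJ : 1 ≤ α * 2 ^ J) {a x y : X} (hr : α * dist x y ≤ r) (hy : 0 < dist y a)
    (hgap : Int.log 2 (dist x a) + J + 1 < Int.log 2 (dist y a)) : a ∈ ball x r := by
  set D : ℝ := 2 ^ (Int.log 2 (dist x a) + 1)
  have hD : 0 < D := zpow_pos two_pos _
  have hxD : dist x a < D := by exact_mod_cast Int.lt_zpow_succ_log_self one_lt_two (dist x a)
  have hyD : 2 * 2 ^ J * D ≤ dist y a := by
    calc 2 * 2 ^ J * D = (2 : ℝ) ^ (Int.log 2 (dist x a) + 1 + (J + 1)) := by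
          rw [zpow_add₀ two_ne_zero, ← Nat.cast_succ, zpow_natCast, pow_succ]; ring
      _ ≤ 2 ^ Int.log 2 (dist y a) := zpow_le_zpow_right₀ one_le_two (by omega)
      _ ≤ dist y a := by exact_mod_cast Int.zpow_log_le_self one_lt_two hy
  have hxy : 2 ^ J * D ≤ dist x y := by
    have := dist_triangle y x a
    nlinarith [dist_comm x y, one_le_pow₀ (M₀ := ℝ) one_le_two (n := J)]
  have hα : 0 ≤ α := by
    by_contra! h
    nlinarith [pow_pos (two_pos (α := ℝ)) J]
  rw [mem_ball, dist_comm]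
  calc dist x a < D := hxD
    _ ≤ α * 2 ^ J * D := le_mul_of_one_le_left hD.le hJ
    _ ≤ α * dist x y := by rw [mul_assoc]; exact mul_le_mul_of_nonneg_left hxy hα
    _ ≤ r := hr

end Geometry

section Drawings

variable {V : Type*} {G : SimpleGraph V} {ρ : V → EuclideanSpace ℝ (Fin 2)} {α : ℝ}

theorem mul_dist_le_plyRadius [Finite V] (hα : 0 ≤ α) {v w : V} (hvw : G.Adj v w) :
    α * dist (ρ v) (ρ w) ≤ plyRadius G ρ α v :=
  mul_le_mul_of_nonneg_left
    (le_ciSup (f := fun w : G.neighborSet v => dist (ρ v) (ρ w))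
      (Set.finite_range _).bddAbove ⟨w, hvw⟩) hα

variable (G ρ α) in
noncomputable def plyDepth (q : EuclideanSpace ℝ (Fin 2)) : ℕ :=
  {v : V | q ∈ ball (ρ v) (plyRadius G ρ α v)}.ncard

theorem exists_forall_plyDepth_le [Finite V] :
    ∃ q, ∀ q', plyDepth G ρ α q' ≤ plyDepth G ρ α q := by
  have hfin : (Set.range (plyDepth G ρ α)).Finite :=
    (Set.finite_Iic (Nat.card V)).subset <| Set.range_subset_iff.2 fun _ => Set.ncard_le_card _
  obtain ⟨_, ⟨q, rfl⟩, hq⟩ := Set.exists_max_image _ id hfin (Set.range_nonempty _)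
  exact ⟨q, fun q' => hq _ ⟨q', rfl⟩⟩

end Drawings

section TreesWithApex

instance (h : ℕ) : Finite {l : List Bool // l.length ≤ h} :=
  (List.finite_length_le Bool h).to_subtype

noncomputable instance (h : ℕ) : Fintype {l : List Bool // l.length ≤ h} := Fintype.ofFinite _

instance (m h : ℕ) : Finite (TreeApexVertex m h) :=
  inferInstanceAs (Finite (Option _))

variable {m h : ℕ}

-- The root is its own parent, since `[].dropLast = []`.
def treeParent (l : {l : List Bool // l.length ≤ h}) : {l : List Bool // l.length ≤ h} :=
  ⟨l.val.dropLast, by rw [List.length_dropLast]; exact (Nat.sub_le _ _).trans l.2⟩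

theorem two_pow_le_card_length_le : 2 ^ h ≤ Fintype.card {l : List Bool // l.length ≤ h} := by
  have := Fintype.card_le_of_injective (fun f : Fin h → Bool => (⟨List.ofFn f, by simp⟩ :
    {l : List Bool // l.length ≤ h})) fun f g e => List.ofFn_injective (congrArg Subtype.val e)
  simpa using this

theorem card_treeParent_eq_le_two (y : {l : List Bool // l.length ≤ h}) :
    #{x | x ≠ y ∧ treeParent x = y} ≤ 2 := by
  calc #{x | x ≠ y ∧ treeParent x = y}
      ≤ #({y.val ++ [false], y.val ++ [true]} : Finset (List Bool)) :=
        card_le_card_of_injOn Subtype.val (fun x hx => by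
          obtain ⟨hne, hpar⟩ := (mem_filter.1 hx).2
          rcases List.eq_nil_or_concat x.val with hx0 | ⟨l, b, hl⟩
          · exact absurd (Subtype.ext (by simp [← hpar, treeParent, hx0])) hne
          · have : l = y.val := by simpa [treeParent, hl] using congrArg Subtype.val hpar
            cases b <;> simp [hl, this]) Subtype.val_injective.injOn
    _ ≤ 2 := card_le_two

theorem treesWithApex_adj_none (x : Fin m × {l : List Bool // l.length ≤ h}) :
    (treesWithApex m h).Adj none (some x) :=
  (SimpleGraph.fromRel_adj _ _ _).2 ⟨(Option.some_ne_none x).symm,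
    Or.inl (Or.inl ⟨rfl, Option.some_ne_none x⟩)⟩

theorem treesWithApex_adj_treeParent (i : Fin m) {l : {l : List Bool // l.length ≤ h}}
    (hl : l ≠ treeParent l) : (treesWithApex m h).Adj (some (i, treeParent l)) (some (i, l)) := by
  refine (SimpleGraph.fromRel_adj _ _ _).2
    ⟨fun e => hl (congrArg Prod.snd (Option.some_injective _ e)).symm, ?_⟩
  rcases List.eq_nil_or_concat l.val with hl0 | ⟨l', b, hl'⟩
  · exact absurd (Subtype.ext (by simp [treeParent, hl0])) hl
  · exact Or.inl (Or.inr ⟨i, _, l, b, rfl, rfl, by simp [treeParent, hl']⟩)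

end TreesWithApex

section OneTree

variable {m h : ℕ} {ρ : TreeApexVertex m h → EuclideanSpace ℝ (Fin 2)} {α : ℝ} {K : ℕ}
  (i : Fin m)

variable (ρ) in
noncomputable def apexScale (l : {l : List Bool // l.length ≤ h}) : ℤ :=
  Int.log 2 (dist (ρ (some (i, l))) (ρ none))

open Classical in
theorem card_filter_mem_ball_le_plyDepth (s : Finset {l : List Bool // l.length ≤ h})
    (q : EuclideanSpace ℝ (Fin 2)) :
    #{l ∈ s | q ∈ ball (ρ (some (i, l))) (plyRadius (treesWithApex m h) ρ α (some (i, l)))} ≤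
      plyDepth (treesWithApex m h) ρ α q := by
  rw [← Set.ncard_coe_finset]
  exact Set.ncard_le_ncard_of_injOn (fun l => some (i, l)) (fun l hl => (mem_filter.1 hl).2)
    (fun l _ l' _ e => congrArg Prod.snd (Option.some_injective _ e))

theorem dist_apex_pos (hρ : Function.Injective ρ) (l : {l : List Bool // l.length ≤ h}) :
    0 < dist (ρ (some (i, l))) (ρ none) :=
  dist_pos.2 (hρ.ne (Option.some_ne_none _))

theorem card_apexScale_eq_le (hρ : Function.Injective ρ) (hα : 0 ≤ α)
    {T : Finset (EuclideanSpace ℝ (Fin 2))} (hT : closedBall 0 1 ⊆ ⋃ g ∈ T, ball g (α / 2))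
    (hK : ∀ q, plyDepth (treesWithApex m h) ρ α q ≤ K) (τ : ℤ) :
    #{l | apexScale ρ i l = τ} ≤ #T * K := by
  classical
  set R : ℝ := 2 ^ (τ + 1)
  have hR : 0 < R := zpow_pos two_pos _
  have hcover : ∀ l ∈ ({l | apexScale ρ i l = τ} : Finset _),
      ∃ g ∈ T.image (fun g => ρ none + R • g),
        g ∈ ball (ρ (some (i, l))) (plyRadius (treesWithApex m h) ρ α (some (i, l))) := by
    intro l hl
    have hτ : apexScale ρ i l = τ := (mem_filter.1 hl).2
    have hlt : dist (ρ (some (i, l))) (ρ none) < 2 ^ (τ + 1) := by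
      rw [← hτ]; exact_mod_cast Int.lt_zpow_succ_log_self (R := ℝ) one_lt_two _
    have hle : (2 : ℝ) ^ τ ≤ dist (ρ (some (i, l))) (ρ none) := by
      rw [← hτ]; exact_mod_cast Int.zpow_log_le_self (R := ℝ) one_lt_two (dist_apex_pos i hρ l)
    obtain ⟨g, hg, hdist⟩ := exists_dist_add_smul_lt_of_closedBall_subset hT hR hlt.le
    refine ⟨_, mem_image_of_mem _ hg, mem_ball'.2 (hdist.trans_le ?_)⟩
    calc α / 2 * R = α * 2 ^ τ := by
          rw [show R = 2 ^ τ * 2 from zpow_add_one₀ two_ne_zero τ]; ring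
      _ ≤ α * dist (ρ (some (i, l))) (ρ none) := mul_le_mul_of_nonneg_left hle hα
      _ ≤ _ := mul_dist_le_plyRadius hα (treesWithApex_adj_none (i, l)).symm
  calc #{l | apexScale ρ i l = τ} ≤ #(T.image fun g => ρ none + R • g) * K :=
        card_le_card_mul_of_forall_exists_mem hcover fun g _ =>
          (card_filter_mem_ball_le_plyDepth i _ g).trans (hK g)
    _ ≤ #T * K := Nat.mul_le_mul_right _ card_image_le

theorem card_apexScale_jump_le (hρ : Function.Injective ρ) (hα : 0 ≤ α) {J : ℕ}
    (hJ : 1 ≤ α * 2 ^ J) (hK : ∀ q, plyDepth (treesWithApex m h) ρ α q ≤ K) :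
    #{l | (J + 1 : ℤ) < |apexScale ρ i l - apexScale ρ i (treeParent l)|} ≤ 3 * K := by
  classical
  set Q : Finset {l : List Bool // l.length ≤ h} :=
    {l | ρ none ∈ ball (ρ (some (i, l))) (plyRadius (treesWithApex m h) ρ α (some (i, l)))}
  have hQ : ∀ {x y}, (treesWithApex m h).Adj (some (i, x)) (some (i, y)) →
      apexScale ρ i x + J + 1 < apexScale ρ i y → x ∈ Q := fun hxy hgap =>
    mem_filter.2 ⟨mem_univ _, mem_ball_of_add_lt_log_dist hJ (mul_dist_le_plyRadius hα hxy)
      (dist_apex_pos i hρ _) hgap⟩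
  calc _ ≤ (2 + 1) * #Q :=
        card_le_mul_card_of_forall_mem_or_parent_mem card_treeParent_eq_le_two fun l hl => by
          have hjump := (mem_filter.1 hl).2
          have hne : l ≠ treeParent l := fun e => by rw [← e, sub_self, abs_zero] at hjump; omega
          have hadj := treesWithApex_adj_treeParent i hne
          rcases lt_abs.1 hjump with hup | hdown
          · exact Or.inr (hQ hadj (by omega))
          · exact Or.inl (hQ hadj.symm (by omega))
    _ ≤ 3 * K := Nat.mul_le_mul_left _ ((card_filter_mem_ball_le_plyDepth i _ _).trans (hK _))

theorem two_pow_le_of_forall_plyDepth_le (hm : 0 < m) (hρ : Function.Injective ρ) (hα : 0 ≤ α)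
    {J : ℕ} (hJ : 1 ≤ α * 2 ^ J) {T : Finset (EuclideanSpace ℝ (Fin 2))}
    (hT : closedBall 0 1 ⊆ ⋃ g ∈ T, ball g (α / 2))
    (hK : ∀ q, plyDepth (treesWithApex m h) ρ α q ≤ K) :
    2 ^ h ≤ 8 * #T * (J + 1) * (h + 1) * K ^ 2 := by
  classical
  set i : Fin m := ⟨0, hm⟩
  set B : Finset {l : List Bool // l.length ≤ h} := insert ⟨[], by simp⟩
    ({l | (J + 1 : ℤ) < |apexScale ρ i l - apexScale ρ i (treeParent l)|} : Finset _)
  have hanchor : ∀ l ∈ univ, ∃ b ∈ B,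
      |apexScale ρ i l - apexScale ρ i b| ≤ (h * (J + 1) : ℕ) := by
    intro l _
    obtain ⟨b, hb, hlb⟩ := exists_abs_sub_le_depth_mul (par := treeParent)
      (fun l => l.val.length) (fun l hl => by simp only [treeParent, List.length_dropLast]; omega)
      (apexScale ρ i) (J + 1) l
    refine ⟨b, ?_, hlb.trans ?_⟩
    · rcases hb with hroot | hjump
      · exact mem_insert.2 (Or.inl (Subtype.ext (List.length_eq_zero_iff.1 hroot)))
      · exact mem_insert_of_mem (mem_filter.2 ⟨mem_univ _, by exact_mod_cast hjump⟩)
    · push_cast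
      exact mul_le_mul_of_nonneg_right (by exact_mod_cast l.2) (by positivity)
  have hB : #B ≤ 3 * K + 1 :=
    (card_insert_le _ _).trans (Nat.add_le_add_right (card_apexScale_jump_le i hρ hα hJ hK) 1)
  have hKsq : (3 * K + 1) * K ≤ 4 * K ^ 2 := by nlinarith
  have hh : 2 * (h * (J + 1)) + 1 ≤ 2 * (J + 1) * (h + 1) := by nlinarith
  calc 2 ^ h ≤ #(univ : Finset {l : List Bool // l.length ≤ h}) := two_pow_le_card_length_le
    _ ≤ #B * (2 * (h * (J + 1)) + 1) * (#T * K) :=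
        card_le_of_forall_exists_abs_sub_le hanchor (card_apexScale_eq_le i hρ hα hT hK)
    _ = #B * K * (2 * (h * (J + 1)) + 1) * #T := by ring
    _ ≤ (3 * K + 1) * K * (2 * (J + 1) * (h + 1)) * #T := by gcongr
    _ ≤ 4 * K ^ 2 * (2 * (J + 1) * (h + 1)) * #T := by gcongr
    _ = 8 * #T * (J + 1) * (h + 1) * K ^ 2 := by ring

end OneTree

theorem exists_two_pow_le_mul_plyDepth_sq {α : ℝ} (hα : 0 < α) :
    ∃ C : ℕ, 0 < C ∧ ∀ {m h : ℕ} (ρ : TreeApexVertex m h → EuclideanSpace ℝ (Fin 2)),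
      Function.Injective ρ → 0 < m →
        ∃ q, 2 ^ h ≤ C * (h + 1) * plyDepth (treesWithApex m h) ρ α q ^ 2 := by
  obtain ⟨J, hJ⟩ : ∃ J : ℕ, 1 ≤ α * 2 ^ J := by
    obtain ⟨J, hJ⟩ := pow_unbounded_of_one_lt α⁻¹ one_lt_two
    exact ⟨J, by rw [inv_lt_iff_one_lt_mul₀' hα] at hJ; exact hJ.le⟩
  obtain ⟨S, -, hSfin, hS⟩ :=
    finite_cover_balls_of_compact (isCompact_closedBall (0 : EuclideanSpace ℝ (Fin 2)) 1)
      (half_pos hα)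
  set T := hSfin.toFinset
  have hT : closedBall 0 1 ⊆ ⋃ g ∈ T, ball g (α / 2) := by simpa [T] using hS
  have hTpos : 0 < #T := by
    obtain ⟨g, hg, -⟩ := Set.mem_iUnion₂.1 (hT (mem_closedBall_self zero_le_one))
    exact card_pos.2 ⟨g, hg⟩
  refine ⟨8 * #T * (J + 1), by positivity, fun {m h} ρ hρ hm => ?_⟩
  obtain ⟨q, hq⟩ := exists_forall_plyDepth_le (G := treesWithApex m h) (ρ := ρ) (α := α)
  exact ⟨q, (two_pow_le_of_forall_plyDepth_le hm hρ hα.le hJ hT hq).trans_eq (by ring)⟩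

theorem div_log_le_of_two_pow_le {n h : ℕ} {C x : ℝ} (hlow : 2 ^ (h + 1) ≤ n)
    (hup : n < 2 ^ (h + 2)) (hbound : 2 ^ h ≤ C * (h + 1) * x) : n / Real.log n ≤ 8 * C * x := by
  have hn : (2 : ℝ) ^ (h + 1) ≤ n := by exact_mod_cast hlow
  have hlog : (h + 1) * Real.log 2 ≤ Real.log n := by
    rw [← Nat.cast_succ, ← Real.log_pow]; exact Real.log_le_log (by positivity) hn
  have hlogpos : 0 < Real.log n := lt_of_lt_of_le (by positivity) hlog
  have hCx : 0 < C * x := by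
    have : 0 < C * x * (h + 1) := by linarith [pow_pos (two_pos (α := ℝ)) h]
    exact pos_of_mul_pos_left this (by positivity)
  have hn' : (n : ℝ) < 4 * 2 ^ h := by
    have : (n : ℝ) < 2 ^ (h + 2) := by exact_mod_cast hup
    linarith [pow_succ (2 : ℝ) h, pow_succ (2 : ℝ) (h + 1)]
  rw [div_le_iff₀ hlogpos]
  nlinarith [Real.log_two_gt_d9]

/-- For every `α > 0` there is a constant `c > 0` such that
for every `n ≥ 16` one can choose `m, h ≥ 1` with `G(m,h)` having at most `n`
vertices (its vertex count is `m·(2^{h+1}−1)+1`) while every straight-line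
drawing of `G(m,h)` has ply number at least `c·√(n / log n)`: there are
2-trees with `O(n)` vertices requiring ply `Ω(√(n / log n))`. -/
theorem stmt9 (α : ℝ) (hα : 0 < α) :
    ∃ c : ℝ, 0 < c ∧
      ∀ n : ℕ, 16 ≤ n →
        ∃ m h : ℕ, 1 ≤ m ∧ 1 ≤ h ∧
          m * (2 ^ (h + 1) - 1) + 1 ≤ n ∧
          ∀ ρ : TreeApexVertex m h → EuclideanSpace ℝ (Fin 2),
            Function.Injective ρ →
            ∃ q : EuclideanSpace ℝ (Fin 2),
              c * Real.sqrt ((n : ℝ) / Real.log n) ≤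
                (Set.ncard {v : TreeApexVertex m h |
                  q ∈ Metric.ball (ρ v) (plyRadius (treesWithApex m h) ρ α v)} : ℝ) := by
  obtain ⟨C, hC, hbound⟩ := exists_two_pow_le_mul_plyDepth_sq hα
  refine ⟨(√(8 * C))⁻¹, by positivity, fun n hn => ?_⟩
  have hlog : 4 ≤ Nat.log 2 n := Nat.le_log_of_pow_le one_lt_two hn
  set h := Nat.log 2 n - 1
  have hlow : 2 ^ (h + 1) ≤ n := by
    rw [show h + 1 = Nat.log 2 n by omega]; exact Nat.pow_log_le_self 2 (by omega)
  have hup : n < 2 ^ (h + 2) := by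
    rw [show h + 2 = Nat.log 2 n + 1 by omega]; exact Nat.lt_pow_succ_log_self one_lt_two n
  refine ⟨1, h, le_rfl, by omega, by have := @Nat.one_le_two_pow (h + 1); omega, fun ρ hρ => ?_⟩
  obtain ⟨q, hq⟩ := hbound ρ hρ one_pos
  refine ⟨q, (inv_mul_le_iff₀ (by positivity)).2 ?_⟩
  calc √(n / Real.log n) ≤ √(8 * C * plyDepth (treesWithApex 1 h) ρ α q ^ 2) :=
        Real.sqrt_le_sqrt (div_log_le_of_two_pow_le hlow hup (by exact_mod_cast hq))
    _ = √(8 * C) * plyDepth (treesWithApex 1 h) ρ α q := by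
        rw [Real.sqrt_mul (by positivity), Real.sqrt_sq (by positivity)]
end
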